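/- arXiv:0907.0014 — 5 statements merged into one kernel-verified Lean document; each statement's English description precedes it below -/
import Mathlib

section
/- For all integers M ≥ 2 and all n ∈ ℤ, the successive increments of f_M are bounded: |f_M(n+1) − f_M(n)| ≤ (N_K + 1)^{M−2}. -/
/-- The number of `M`-tuples `(n_1, …, n_M)` with each `n_i ∈ {0, …, NK}`
and `n_1 + ⋯ + n_M = n`. -/
def f (NK M : ℕ) (n : ℤ) : ℕ :=
  (Finset.univ.filter
    (fun t : Fin M → Fin (NK + 1) => (∑ i, ((t i : ℕ) : ℤ)) = n)).card

/-!
Splitting off the first coordinate gives `f_{M+1}(n) = ∑_{k=0}^{N_K} f_M(n - k)`, so in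
`f_{M+1}(n+1) - f_{M+1}(n)` all terms cancel except `f_M(n+1) - f_M(n - N_K)`. Both are counts
in `[0, (N_K+1)^{M-1}]`, since a tuple with prescribed sum is determined by its last `M - 1`
coordinates.
-/

open Finset

lemma f_succ_eq_sum_sum_ite (NK M : ℕ) (n : ℤ) :
    f NK (M + 1) n = ∑ k : Fin (NK + 1), ∑ s : Fin M → Fin (NK + 1),
      if ((k : ℕ) : ℤ) + ∑ i, ((s i : ℕ) : ℤ) = n then 1 else 0 := by
  rw [f, card_filter, ← Fintype.sum_prod_type',
    ← (Fin.consEquiv fun _ => Fin (NK + 1)).sum_comp]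
  simp [Fin.consEquiv, Fin.sum_univ_succ]

lemma f_succ (NK M : ℕ) (n : ℤ) :
    f NK (M + 1) n = ∑ k ∈ range (NK + 1), f NK M (n - k) := by
  rw [f_succ_eq_sum_sum_ite, ← Fin.sum_univ_eq_sum_range]
  refine Fintype.sum_congr _ _ fun k => ?_
  rw [f, card_filter]
  simp only [eq_sub_iff_add_eq']

lemma f_succ_le (NK M : ℕ) (n : ℤ) : f NK (M + 1) n ≤ (NK + 1) ^ M := by
  rw [f_succ_eq_sum_sum_ite, sum_comm]
  calc _ ≤ ∑ _s : Fin M → Fin (NK + 1), 1 := by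
        refine sum_le_sum fun s _ => ?_
        rw [← card_filter]
        refine card_le_one.2 fun a ha b hb => Fin.ext ?_
        simp only [mem_filter] at ha hb
        omega
    _ = (NK + 1) ^ M := by simp

lemma sum_range_shift_sub {G : Type*} [AddCommGroup G] (g : ℤ → G) (n : ℤ) (N : ℕ) :
    ∑ k ∈ range (N + 1), g (n + 1 - k) - ∑ k ∈ range (N + 1), g (n - k) =
      g (n + 1) - g (n - N) := by
  rw [← sum_sub_distrib]
  convert sum_range_sub' (fun k : ℕ => g (n + 1 - k)) (N + 1) using 3 <;> push_cast <;> ring_nf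

lemma f_succ_succ_sub (NK M : ℕ) (n : ℤ) :
    (f NK (M + 1) (n + 1) : ℤ) - f NK (M + 1) n = (f NK M (n + 1) : ℤ) - f NK M (n - NK) := by
  simp only [f_succ, Nat.cast_sum]
  exact sum_range_shift_sub (fun m => (f NK M m : ℤ)) n NK

theorem stmt2_general (NK : ℕ) (M : ℕ) (hM : 2 ≤ M) (n : ℤ) :
    |(f NK M (n + 1) : ℤ) - (f NK M n : ℤ)| ≤ ((NK : ℤ) + 1) ^ (M - 2) := by
  obtain ⟨m, rfl⟩ : ∃ m, M = m + 2 := ⟨M - 2, by omega⟩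
  rw [f_succ_succ_sub, Nat.add_sub_cancel]
  have hbound : ∀ x, (f NK (m + 1) x : ℤ) ≤ ((NK : ℤ) + 1) ^ m := fun x => by
    exact_mod_cast f_succ_le NK m x
  exact abs_sub_le_of_nonneg_of_le (Int.natCast_nonneg _) (hbound _) (Int.natCast_nonneg _)
    (hbound _)

/-- The successive increments of `f_M` are bounded by `(N_K + 1)^(M-2)` for `M ≥ 2`. -/
theorem stmt2 (NK : ℕ) (hNK : 0 < NK) (M : ℕ) (hM : 2 ≤ M) (n : ℤ) :
    |(f NK M (n + 1) : ℤ) - (f NK M n : ℤ)| ≤ ((NK : ℤ) + 1) ^ (M - 2) :=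
  stmt2_general NK M hM n
end

section
/- For every integer M ≥ 3, the sum Σ_{n=−1}^{M·N_K} (f_M(n+1) − f_M(n))² / (f_M(n+1) + f_M(n)) (each term interpreted as 0 when the denominator is 0, with differences and ratios taken in ℝ) is at most M! · (N_K + 1)^{M−2}. -/
open Finset

lemma sq_sum_div_le_sum_sq_div_of_nonneg {ι R : Type*} [Field R] [LinearOrder R]
    [IsStrictOrderedRing R] (s : Finset ι) (u v : ι → R) (hv : ∀ i ∈ s, 0 ≤ v i)
    (huv : ∀ i ∈ s, v i = 0 → u i = 0) :
    (∑ i ∈ s, u i) ^ 2 / ∑ i ∈ s, v i ≤ ∑ i ∈ s, u i ^ 2 / v i := by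
  have hsupp {w : ι → R} (hw : ∀ i ∈ s, v i = 0 → w i = 0) :
      ∑ i ∈ s with v i ≠ 0, w i = ∑ i ∈ s, w i :=
    sum_filter_of_ne fun i hi hwi hvi => hwi (hw i hi hvi)
  rw [← hsupp huv, ← hsupp fun _ _ => id, ← hsupp fun i _ hvi => by simp [hvi]]
  exact sq_sum_div_le_sum_sq_div _ _ fun i hi =>
    (hv i (mem_filter.1 hi).1).lt_of_ne' (mem_filter.1 hi).2

lemma sq_sub_le_sum_add {R : Type*} [CommRing R] [LinearOrder R] [IsStrictOrderedRing R]
    (h : ℕ → R) (h_nonneg : ∀ k, 0 ≤ h k) (h_lip : ∀ k, |h (k + 1) - h k| ≤ 1)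
    (L : ℕ) :
    (h 0 - h L) ^ 2 ≤ ∑ k ∈ range L, (h k + h (k + 1)) := by
  have hstep (k : ℕ) : |h k ^ 2 - h (k + 1) ^ 2| ≤ h k + h (k + 1) := by
    have hsum : 0 ≤ h k + h (k + 1) := add_nonneg (h_nonneg k) (h_nonneg (k + 1))
    rw [sq_sub_sq, abs_mul, abs_of_nonneg hsum, abs_sub_comm]
    exact mul_le_of_le_one_right hsum (h_lip k)
  calc (h 0 - h L) ^ 2 ≤ |h 0 ^ 2 - h L ^ 2| := by
        have h0 := h_nonneg 0
        have hL := h_nonneg L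
        rw [sq_sub_sq, abs_mul, abs_of_nonneg (add_nonneg h0 hL), sq, ← abs_mul_abs_self]
        exact mul_le_mul_of_nonneg_right (abs_sub_le_iff.2 ⟨by linarith, by linarith⟩)
          (abs_nonneg _)
    _ = |∑ k ∈ range L, (h k ^ 2 - h (k + 1) ^ 2)| := by rw [sum_range_sub']
    _ ≤ ∑ k ∈ range L, (h k + h (k + 1)) :=
        (abs_sum_le_sum_abs _ _).trans (sum_le_sum fun k _ => hstep k)

lemma sum_val_mem_Icc {NK M : ℕ} (t : Fin M → Fin (NK + 1)) :
    ∑ i, ((t i : ℕ) : ℤ) ∈ Icc 0 (M * NK : ℤ) := by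
  refine mem_Icc.2 ⟨sum_nonneg fun i _ => by positivity, ?_⟩
  calc ∑ i, ((t i : ℕ) : ℤ) ≤ ∑ _i : Fin M, (NK : ℤ) :=
        sum_le_sum fun i _ => by exact_mod_cast Fin.is_le (t i)
    _ = M * NK := by simp

lemma f_eq_zero_of_notMem (NK M : ℕ) {n : ℤ} (hn : n ∉ Icc 0 (M * NK : ℤ)) : f NK M n = 0 :=
  card_eq_zero.2 <| filter_eq_empty_iff.2 fun t _ ht => hn (ht ▸ sum_val_mem_Icc t)

lemma f_one_le_one (NK : ℕ) (n : ℤ) : f NK 1 n ≤ 1 := by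
  refine card_le_one.2 fun x hx y hy => funext fun i => ?_
  simp only [mem_filter, Fin.sum_univ_one] at hx hy
  rw [Subsingleton.elim i 0]
  exact Fin.ext (by omega)

lemma f_succ_add_one_sub (NK M : ℕ) (n : ℤ) :
    (f NK (M + 1) (n + 1) : ℤ) - f NK (M + 1) n = f NK M (n + 1) - f NK M (n - NK) := by
  have hshift : ∑ k ∈ range (NK + 1), (f NK M (n - k) : ℤ)
      = ∑ k ∈ range (NK + 1), (f NK M (n + 1 - (k + 1 : ℕ)) : ℤ) :=
    sum_congr rfl fun k _ => by push_cast; ring_nf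
  rw [f_succ, f_succ, Nat.cast_sum, Nat.cast_sum, hshift, ← sum_sub_distrib,
    sum_range_sub' fun k : ℕ => (f NK M (n + 1 - k) : ℤ)]
  push_cast
  ring_nf

lemma abs_f_two_add_one_sub_le (NK : ℕ) (n : ℤ) :
    |(f NK 2 (n + 1) : ℤ) - f NK 2 n| ≤ 1 := by
  have h₁ := f_one_le_one NK (n + 1)
  have h₂ := f_one_le_one NK (n - NK)
  rw [f_succ_add_one_sub]
  exact abs_sub_le_iff.2 ⟨by omega, by omega⟩

lemma sq_f_three_add_one_sub_le (NK : ℕ) (n : ℤ) :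
    ((f NK 3 (n + 1) : ℤ) - f NK 3 n) ^ 2 ≤ f NK 3 (n + 1) + f NK 3 n := by
  have hlip (k : ℕ) : |(f NK 2 (n + 1 - (k + 1 : ℕ)) : ℤ) - f NK 2 (n + 1 - k)| ≤ 1 := by
    rw [abs_sub_comm, show n + 1 - k = n - k + 1 by ring, show n + 1 - (k + 1 : ℕ) = n - k by
      push_cast; ring]
    exact abs_f_two_add_one_sub_le NK (n - k)
  have h := sq_sub_le_sum_add (fun k : ℕ => (f NK 2 (n + 1 - k) : ℤ))
    (fun _ => Nat.cast_nonneg _) hlip (NK + 1)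
  have hsum : (f NK 3 (n + 1) : ℤ) + f NK 3 n
      = ∑ k ∈ range (NK + 1),
          ((f NK 2 (n + 1 - k) : ℤ) + f NK 2 (n + 1 - (k + 1 : ℕ))) := by
    rw [f_succ, f_succ, sum_add_distrib]
    push_cast
    ring_nf
  rw [f_succ_add_one_sub, hsum]
  rwa [Nat.cast_zero, sub_zero, show n + 1 - (NK + 1 : ℕ) = n - NK by push_cast; ring] at h

noncomputable def jumpRatio (NK M : ℕ) (n : ℤ) : ℝ :=
  ((f NK M (n + 1) : ℝ) - f NK M n) ^ 2 / ((f NK M (n + 1) : ℝ) + f NK M n)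

noncomputable def jumpSum (NK M : ℕ) : ℝ :=
  ∑ n ∈ Icc (-1 : ℤ) (M * NK), jumpRatio NK M n

lemma jumpRatio_eq_zero (NK M : ℕ) {n : ℤ} (hn : n ∉ Icc (-1 : ℤ) (M * NK)) :
    jumpRatio NK M n = 0 := by
  rw [mem_Icc] at hn
  rw [jumpRatio, f_eq_zero_of_notMem NK M (n := n) (by rw [mem_Icc]; omega),
    f_eq_zero_of_notMem NK M (n := n + 1) (by rw [mem_Icc]; omega)]
  simp

lemma sum_jumpRatio_of_subset (NK M : ℕ) {s : Finset ℤ} (hs : Icc (-1 : ℤ) (M * NK) ⊆ s) :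
    ∑ n ∈ s, jumpRatio NK M n = jumpSum NK M :=
  (sum_subset hs fun _ _ hn => jumpRatio_eq_zero NK M hn).symm

lemma jumpRatio_succ_le (NK M : ℕ) (n : ℤ) :
    jumpRatio NK (M + 1) n ≤ ∑ k ∈ range (NK + 1), jumpRatio NK M (n - k) := by
  have hsucc (m : ℤ) :
      (f NK (M + 1) m : ℝ) = ∑ k ∈ range (NK + 1), (f NK M (m - k) : ℝ) := by
    rw [f_succ, Nat.cast_sum]
  simp only [jumpRatio, hsucc, add_sub_right_comm n 1, ← sum_sub_distrib, ← sum_add_distrib]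
  refine sq_sum_div_le_sum_sq_div_of_nonneg _ _ _ (fun _ _ => by positivity) fun k _ hk => ?_
  rw [← Nat.cast_add, Nat.cast_eq_zero, Nat.add_eq_zero_iff] at hk
  simp [hk]

lemma jumpSum_succ_le (NK M : ℕ) : jumpSum NK (M + 1) ≤ (NK + 1) * jumpSum NK M := by
  set I := Icc (-1 : ℤ) ((M + 1 : ℕ) * NK)
  have hshift (k : ℕ) (hk : k ∈ range (NK + 1)) :
      ∑ n ∈ I, jumpRatio NK M (n - k) = jumpSum NK M := by
    have hsub : Icc (-1 : ℤ) (M * NK) ⊆ I.map (addRightEmbedding (-(k : ℤ))) := by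
      rw [mem_range] at hk
      rw [map_add_right_Icc]
      apply Icc_subset_Icc <;> push_cast <;> nlinarith
    rw [← sum_jumpRatio_of_subset NK M hsub, sum_map]
    simp [sub_eq_add_neg]
  calc jumpSum NK (M + 1) ≤ ∑ n ∈ I, ∑ k ∈ range (NK + 1), jumpRatio NK M (n - k) :=
        sum_le_sum fun n _ => jumpRatio_succ_le NK M n
    _ = ∑ k ∈ range (NK + 1), ∑ n ∈ I, jumpRatio NK M (n - k) := sum_comm
    _ = (NK + 1) * jumpSum NK M := by simp [sum_congr rfl hshift]

lemma jumpRatio_three_le_one (NK : ℕ) (n : ℤ) : jumpRatio NK 3 n ≤ 1 :=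
  div_le_one_of_le₀ (by exact_mod_cast sq_f_three_add_one_sub_le NK n) (by positivity)

lemma jumpSum_three_le (NK : ℕ) : jumpSum NK 3 ≤ 3 * NK + 2 := by
  have hcard : #(Icc (-1 : ℤ) ((3 : ℕ) * NK)) = 3 * NK + 2 := by
    rw [Int.card_Icc]
    omega
  calc jumpSum NK 3 ≤ #(Icc (-1 : ℤ) ((3 : ℕ) * NK)) • (1 : ℝ) :=
        sum_le_card_nsmul _ _ _ fun n _ => jumpRatio_three_le_one NK n
    _ = 3 * NK + 2 := by
        rw [nsmul_one, hcard]
        push_cast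
        ring

lemma jumpSum_le (NK : ℕ) {M : ℕ} (hM : 3 ≤ M) :
    jumpSum NK M ≤ (3 * NK + 2) * (NK + 1) ^ (M - 3) := by
  induction M, hM using Nat.le_induction with
  | base => simpa using jumpSum_three_le NK
  | succ M hM ih =>
    calc jumpSum NK (M + 1) ≤ (NK + 1) * jumpSum NK M := jumpSum_succ_le NK M
      _ ≤ (NK + 1) * ((3 * NK + 2) * (NK + 1) ^ (M - 3)) := by gcongr
      _ = (3 * NK + 2) * (NK + 1) ^ (M + 1 - 3) := by
        rw [show M + 1 - 3 = M - 3 + 1 by omega]; ring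

lemma sum_range_eq_jumpSum (NK M : ℕ) :
    (∑ i ∈ range (M * NK + 2),
      (if f NK M ((i : ℤ) - 1 + 1) + f NK M ((i : ℤ) - 1) = 0 then (0 : ℝ)
        else ((f NK M ((i : ℤ) - 1 + 1) : ℝ) - (f NK M ((i : ℤ) - 1) : ℝ)) ^ 2 /
          ((f NK M ((i : ℤ) - 1 + 1) : ℝ) + (f NK M ((i : ℤ) - 1) : ℝ))))
    = jumpSum NK M := by
  -- Since `x / 0 = 0`, the case split is already built into the division.
  have hite (a b : ℕ) : (if a + b = 0 then (0 : ℝ) else ((a : ℝ) - b) ^ 2 / ((a : ℝ) + b))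
      = ((a : ℝ) - b) ^ 2 / ((a : ℝ) + b) :=
    ite_eq_right_iff.2 fun h => by simp [Nat.add_eq_zero_iff.1 h]
  simp only [hite]
  refine sum_nbij' (fun i => (i : ℤ) - 1) (fun n => (n + 1).toNat) ?_ ?_ ?_ ?_ fun i _ => rfl
  all_goals
    intro x hx
    simp only [mem_range, mem_Icc] at hx ⊢
    omega

theorem stmt8_general (NK : ℕ) (M : ℕ) (hM : 3 ≤ M) :
    (∑ i ∈ Finset.range (M * NK + 2),
      (if f NK M ((i : ℤ) - 1 + 1) + f NK M ((i : ℤ) - 1) = 0 then (0 : ℝ)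
        else ((f NK M ((i : ℤ) - 1 + 1) : ℝ) - (f NK M ((i : ℤ) - 1) : ℝ)) ^ 2 /
          ((f NK M ((i : ℤ) - 1 + 1) : ℝ) + (f NK M ((i : ℤ) - 1) : ℝ))))
    ≤ (Nat.factorial M : ℝ) * ((NK : ℝ) + 1) ^ (M - 2) := by
  rw [sum_range_eq_jumpSum]
  calc jumpSum NK M ≤ (3 * NK + 2) * (NK + 1) ^ (M - 3) := jumpSum_le NK hM
    _ ≤ (Nat.factorial 3 * (NK + 1)) * (NK + 1) ^ (M - 3) := by
        gcongr
        norm_num [Nat.factorial]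
        linarith
    _ = Nat.factorial 3 * (NK + 1) ^ (M - 2) := by
        rw [show M - 2 = M - 3 + 1 by omega]; ring
    _ ≤ Nat.factorial M * (NK + 1) ^ (M - 2) := by
        gcongr

/-- For `M ≥ 3`, the sum `Σ_{n=−1}^{M·N_K} (f_M(n+1) − f_M(n))² / (f_M(n+1) + f_M(n))`
(each term interpreted as 0 when the denominator vanishes) is at most
`M! · (N_K + 1)^(M−2)`. -/
theorem stmt8 (NK : ℕ) (hNK : 0 < NK) (M : ℕ) (hM : 3 ≤ M) :
    (∑ i ∈ Finset.range (M * NK + 2),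
      (if f NK M ((i : ℤ) - 1 + 1) + f NK M ((i : ℤ) - 1) = 0 then (0 : ℝ)
        else ((f NK M ((i : ℤ) - 1 + 1) : ℝ) - (f NK M ((i : ℤ) - 1) : ℝ)) ^ 2 /
          ((f NK M ((i : ℤ) - 1 + 1) : ℝ) + (f NK M ((i : ℤ) - 1) : ℝ))))
    ≤ (Nat.factorial M : ℝ) * ((NK : ℝ) + 1) ^ (M - 2) :=
  stmt8_general NK M hM
end

section
/- (Theorem 1, case M = 2, exact asymptotics.) Define v(N_K) := 2·(1 − (2/(N_K+1)²) · Σ_{n=1}^{N_K} √(n(n+1))), which equals the canonical Collett phase variance of two copies of the equal superposition state. Then v(N_K) · N_K² / ln(N_K) → 1/2 as N_K → ∞; in particular v(N_K) = Θ(ln N_K / N_K²), so two copies do not attain Heisenberg-limited 1/N_K² scaling. -/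
/-!
The AM–GM gap `g(x) = x + 1/2 - √(x(x+1))` equals `(1/4) / (x + 1/2 + √(x(x+1)))`, so
`1/(8(x+1)) ≤ g(x) ≤ 1/(8x)`. Since `v(N)·(N+1)² = 2 + 4 ∑_{n=1}^{N} g(n)`, the harmonic bounds
`log(N+1) ≤ H_N ≤ 1 + log N` show that `v(N)·(N+1)²` is `(log N)/2` up to a bounded error;
dividing by `log N` and using `N²/(N+1)² → 1` gives the limit `1/2`.
-/

/-- The canonical Collett phase variance of two copies of the equal superposition
state: `v(N_K) = 2·(1 − (2/(N_K+1)²) · Σ_{n=1}^{N_K} √(n(n+1)))`. -/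
noncomputable def v (NK : ℕ) : ℝ :=
  2 * (1 - (2 / ((NK : ℝ) + 1) ^ 2) *
    ∑ n ∈ Finset.range NK, Real.sqrt (((n : ℝ) + 1) * ((n : ℝ) + 2)))

open Filter Topology Finset Real

noncomputable def amGmGap (x : ℝ) : ℝ := x + 1 / 2 - √(x * (x + 1))

lemma amGmGap_mul_eq {x : ℝ} (hx : 0 ≤ x) :
    amGmGap x * (x + 1 / 2 + √(x * (x + 1))) = 1 / 4 := by
  have hsq := Real.sq_sqrt (by positivity : 0 ≤ x * (x + 1))
  unfold amGmGap
  nlinarith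

lemma one_div_eight_mul_add_one_le_amGmGap {x : ℝ} (hx : 0 ≤ x) :
    1 / (8 * (x + 1)) ≤ amGmGap x := by
  have hsqrt : √(x * (x + 1)) ≤ x + 1 / 2 :=
    Real.sqrt_le_iff.2 ⟨by positivity, by nlinarith⟩
  have hsum : 0 < x + 1 / 2 + √(x * (x + 1)) := by positivity
  have := amGmGap_mul_eq hx
  rw [div_le_iff₀ (by positivity)]
  nlinarith

lemma amGmGap_le_one_div_eight_mul {x : ℝ} (hx : 0 < x) :
    amGmGap x ≤ 1 / (8 * x) := by
  have hsqrt : x ≤ √(x * (x + 1)) :=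
    Real.le_sqrt_of_sq_le (by nlinarith)
  have := amGmGap_mul_eq hx.le
  rw [le_div_iff₀ (by positivity)]
  nlinarith

lemma v_mul_sq_eq (N : ℕ) :
    v N * ((N : ℝ) + 1) ^ 2 = 2 + 4 * ∑ n ∈ range N, amGmGap ((n : ℝ) + 1) := by
  have hlin : ∑ n ∈ range N, ((n : ℝ) + 3 / 2) = N * (N + 2) / 2 := by
    induction N with
    | zero => simp
    | succ k ih => rw [sum_range_succ, ih]; push_cast; ring
  have hgap (n : ℕ) :
      amGmGap ((n : ℝ) + 1) = ((n : ℝ) + 3 / 2) - √(((n : ℝ) + 1) * ((n : ℝ) + 2)) := by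
    unfold amGmGap; ring_nf
  simp only [hgap, sum_sub_distrib, hlin, v]
  field_simp
  ring

lemma harmonic_eq_sum_one_div (N : ℕ) :
    (harmonic N : ℝ) = ∑ n ∈ range N, 1 / ((n : ℝ) + 1) := by
  simp [harmonic]

lemma sum_amGmGap_le (N : ℕ) :
    ∑ n ∈ range N, amGmGap ((n : ℝ) + 1) ≤ (1 + log N) / 8 :=
  calc ∑ n ∈ range N, amGmGap ((n : ℝ) + 1)
      ≤ ∑ n ∈ range N, 1 / (8 * ((n : ℝ) + 1)) :=
        sum_le_sum fun n _ => amGmGap_le_one_div_eight_mul (by positivity)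
    _ = harmonic N / 8 := by
        rw [harmonic_eq_sum_one_div, sum_div]
        exact sum_congr rfl fun n _ => by rw [div_div, mul_comm]
    _ ≤ (1 + log N) / 8 := by gcongr; exact harmonic_le_one_add_log N

lemma log_sub_one_le_sum_amGmGap (N : ℕ) :
    (log N - 1) / 8 ≤ ∑ n ∈ range N, amGmGap ((n : ℝ) + 1) :=
  calc (log N - 1) / 8
      ≤ (harmonic (N + 1) - 1) / 8 := by
        have hmono : log N ≤ log ((N + 1 + 1 : ℕ) : ℝ) := by
          rcases N.eq_zero_or_pos with rfl | hN
          · simpa using log_natCast_nonneg 2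
          · exact log_le_log (by positivity) (by push_cast; linarith)
        linarith [log_add_one_le_harmonic (N + 1)]
    _ = ∑ n ∈ range N, 1 / (8 * ((n : ℝ) + 1 + 1)) := by
        rw [harmonic_eq_sum_one_div, sum_range_succ']
        push_cast
        rw [zero_add, div_one, add_sub_cancel_right, sum_div]
        exact sum_congr rfl fun n _ => by rw [div_div, mul_comm]
    _ ≤ ∑ n ∈ range N, amGmGap ((n : ℝ) + 1) :=
        sum_le_sum fun n _ => one_div_eight_mul_add_one_le_amGmGap (by positivity)

lemma tendsto_div_of_abs_sub_mul_le {α : Type*} {l : Filter α} {f g : α → ℝ} {c C : ℝ}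
    (hg : Tendsto g l atTop) (h : ∀ᶠ x in l, |f x - c * g x| ≤ C) :
    Tendsto (fun x => f x / g x) l (𝓝 c) := by
  have hC : Tendsto (fun x => C / g x) l (𝓝 0) := hg.const_div_atTop C
  rw [tendsto_iff_norm_sub_tendsto_zero]
  refine squeeze_zero_norm' ?_ hC
  filter_upwards [h, hg.eventually_gt_atTop 0] with x hx hgx
  calc ‖‖f x / g x - c‖‖ = |f x - c * g x| / g x := by
        rw [norm_norm, Real.norm_eq_abs, ← abs_of_pos hgx, ← abs_div, abs_of_pos hgx, sub_div,
          mul_div_cancel_right₀ _ hgx.ne']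
    _ ≤ C / g x := by gcongr

/-- Theorem 1, case `M = 2`, exact asymptotics: `v(N_K) · N_K² / ln(N_K) → 1/2`
as `N_K → ∞`; in particular `v(N_K) = Θ(ln N_K / N_K²)`, so two copies do not attain
Heisenberg-limited `1/N_K²` scaling. -/
theorem stmt11 :
    Filter.Tendsto (fun NK : ℕ => v NK * (NK : ℝ) ^ 2 / Real.log NK)
      Filter.atTop (nhds (1 / 2)) := by
  have hlog : Tendsto (fun N : ℕ => log N) atTop atTop :=
    tendsto_log_atTop.comp tendsto_natCast_atTop_atTop
  have hmain : Tendsto (fun N : ℕ => v N * ((N : ℝ) + 1) ^ 2 / log N) atTop (𝓝 (1 / 2)) := by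
    refine tendsto_div_of_abs_sub_mul_le hlog (C := 5 / 2) (Eventually.of_forall fun N => ?_)
    rw [v_mul_sq_eq, abs_sub_le_iff]
    constructor <;> linarith [sum_amGmGap_le N, log_sub_one_le_sum_amGmGap N]
  have hratio : Tendsto (fun N : ℕ => ((N : ℝ) / (N + 1)) ^ 2) atTop (𝓝 1) := by
    simpa using (tendsto_natCast_div_add_atTop (1 : ℝ)).pow 2
  convert hmain.mul hratio using 2 with N
  · field_simp
  · norm_num
end

section
/- (Analytic result for M = 1, the QPEA.) Let c : ℕ → ℝ be defined by c_0 = 0 and c_{j+1} = (2^{−j} + c_j)/4. Then c_j = (2^j − 1)/4^j for all j ≥ 0. Consequently, for every integer K ≥ 0, the sharpness of the quantum phase estimation algorithm, μ_K := 2^{K+1} · c_{K+1}, equals 1 − 2^{−(K+1)}, and the resulting Holevo phase variance satisfies V_H = μ_K^{−2} − 1 = 2/N + 1/N², where N = 2^{K+1} − 1 is the total number of resources. Thus the QPEA achieves only standard-quantum-limit scaling Θ(1/N), not the Heisenberg limit. -/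
/-! Multiplying the recurrence by `4^{j+1}` turns it into `4^{j+1} c_{j+1} = 2^j + 4^j c_j`,
a geometric sum, so `4^j c_j = 2^j − 1`. With `x = 2^{K+1}` the sharpness is
`x (x − 1)/x² = 1 − 1/x`, and `(1 − 1/x)^{−2} = (1 + 1/(x − 1))²` gives the variance. -/

theorem eq_of_qpea_recurrence (c : ℕ → ℝ) (h0 : c 0 = 0)
    (hrec : ∀ j : ℕ, c (j + 1) = ((2 : ℝ) ^ (-(j : ℤ)) + c j) / 4) (j : ℕ) :
    c j = ((2 : ℝ) ^ j - 1) / 4 ^ j := by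
  induction j with
  | zero => simpa using h0
  | succ n ih =>
    have h4 : (4 : ℝ) ^ n = 2 ^ n * 2 ^ n := by rw [← mul_pow]; norm_num
    rw [hrec n, ih, zpow_neg, zpow_natCast, pow_succ, pow_succ, h4]
    field_simp
    ring

theorem mul_sub_one_div_sq {K : Type*} [Field K] {x : K} (hx : x ≠ 0) :
    x * ((x - 1) / x ^ 2) = 1 - x⁻¹ := by
  field_simp

theorem one_sub_inv_zpow_neg_two_sub_one {K : Type*} [Field K] {x : K} (hx0 : x ≠ 0)
    (hx1 : x ≠ 1) : (1 - x⁻¹) ^ (-2 : ℤ) - 1 = 2 / (x - 1) + 1 / (x - 1) ^ 2 := by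
  have hx1' : x - 1 ≠ 0 := sub_ne_zero.mpr hx1
  have hinv : (1 - x⁻¹)⁻¹ = 1 + 1 / (x - 1) := by
    field_simp
    ring
  rw [zpow_neg, zpow_two, mul_inv, hinv]
  field_simp
  ring

/-- Analytic result for `M = 1` (the QPEA): if `c_0 = 0` and
`c_{j+1} = (2^{−j} + c_j)/4`, then `c_j = (2^j − 1)/4^j` for all `j`; consequently
the sharpness `μ_K = 2^{K+1} · c_{K+1}` equals `1 − 2^{−(K+1)}`, and the Holevo
phase variance is `V_H = μ_K^{−2} − 1 = 2/N + 1/N²` with `N = 2^{K+1} − 1` the total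
number of resources: only standard-quantum-limit scaling `Θ(1/N)`. -/
theorem stmt18 (c : ℕ → ℝ) (h0 : c 0 = 0)
    (hrec : ∀ j : ℕ, c (j + 1) = ((2 : ℝ) ^ (-(j : ℤ)) + c j) / 4) :
    (∀ j : ℕ, c j = ((2 : ℝ) ^ j - 1) / 4 ^ j) ∧
    (∀ K : ℕ,
      (2 : ℝ) ^ (K + 1) * c (K + 1) = 1 - (2 : ℝ) ^ (-((K : ℤ) + 1)) ∧
      ((2 : ℝ) ^ (K + 1) * c (K + 1)) ^ (-2 : ℤ) - 1
        = 2 / ((2 : ℝ) ^ (K + 1) - 1) + 1 / ((2 : ℝ) ^ (K + 1) - 1) ^ 2) := by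
  have hform := eq_of_qpea_recurrence c h0 hrec
  refine ⟨hform, fun K => ?_⟩
  have hx0 : (2 : ℝ) ^ (K + 1) ≠ 0 := by positivity
  have hx1 : (2 : ℝ) ^ (K + 1) ≠ 1 := (one_lt_pow₀ one_lt_two K.succ_ne_zero).ne'
  have hsharp : (2 : ℝ) ^ (K + 1) * c (K + 1) = 1 - ((2 : ℝ) ^ (K + 1))⁻¹ := by
    have h4 : (4 : ℝ) ^ (K + 1) = (2 ^ (K + 1)) ^ 2 := by rw [← pow_mul, mul_comm, pow_mul]; norm_num
    rw [hform, h4]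
    exact mul_sub_one_div_sq hx0
  have hzpow : (2 : ℝ) ^ (-((K : ℤ) + 1)) = ((2 : ℝ) ^ (K + 1))⁻¹ := by
    rw [zpow_neg]; norm_cast
  rw [hsharp, hzpow]
  exact ⟨rfl, one_sub_inv_zpow_neg_two_sub_one hx0 hx1⟩
end

section
/- (Analytic result for M = 2.) Let b : ℕ → ℝ be defined by b_0 = 0 and b_{j+1} = (√2/8) · √(16^{−j} + b_j²). Then b_j = 4^{−j} · √(1 − 2^{−j}) for all j ≥ 0. Consequently, for every integer K ≥ 0, the sharpness μ_K := 4^{K+1} · b_{K+1} equals √(1 − 2^{−(K+1)}), and the resulting Holevo phase variance is exactly V_H = μ_K^{−2} − 1 = 1/(2^{K+1} − 1) = 2/N, where N = 2·(2^{K+1} − 1) is the total number of resources. Thus the adaptive scheme with two copies of each NOON state still gives only standard-quantum-limit scaling. -/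
/-! Writing `x = 2^{-j}`, the guess `b_j = x² √(1 - x)` turns the radicand of the recurrence into
`x⁴ + x⁴ (1 - x) = x⁴ (2 - x)`, and `(√2 / 8) · x² √(2 - x) = (x/2)² √(1 - x/2)` is the guess at
`j + 1`. The sharpness and the Holevo variance are then read off at `x = 2^{-(K+1)}`. -/

lemma zpow_neg_natCast_pow (a : ℝ) (n j : ℕ) :
    (a ^ n) ^ (-(j : ℤ)) = (a ^ (-(j : ℤ))) ^ n := by
  simp only [zpow_neg, zpow_natCast, inv_pow, ← pow_mul, mul_comm]

lemma two_zpow_neg_succ (j : ℕ) :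
    (2 : ℝ) ^ (-((j + 1 : ℕ) : ℤ)) = (2 : ℝ) ^ (-(j : ℤ)) / 2 := by
  simp only [zpow_neg, zpow_natCast, pow_succ, mul_inv, div_eq_mul_inv]

lemma sqrt_two_div_eight_mul_sqrt {x : ℝ} (hx : x ≤ 1) :
    √2 / 8 * √(x ^ 4 + (x ^ 2 * √(1 - x)) ^ 2) = (x / 2) ^ 2 * √(1 - x / 2) := by
  have h1 : 0 ≤ 1 - x := by linarith
  have h2 : 0 ≤ 1 - x / 2 := by linarith
  rw [← sq_eq_sq₀ (by positivity) (by positivity)]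
  simp only [mul_pow, div_pow, Real.sq_sqrt h1, Real.sq_sqrt h2, Real.sq_sqrt zero_le_two,
    Real.sq_sqrt (by positivity : 0 ≤ x ^ 4 + (x ^ 2) ^ 2 * (1 - x))]
  ring

lemma sharpness_recurrence_closed_form (b : ℕ → ℝ) (h0 : b 0 = 0)
    (hrec : ∀ j : ℕ, b (j + 1) = (√2 / 8) * √((16 : ℝ) ^ (-(j : ℤ)) + (b j) ^ 2)) (j : ℕ) :
    b j = (4 : ℝ) ^ (-(j : ℤ)) * √(1 - (2 : ℝ) ^ (-(j : ℤ))) := by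
  have h4 : (4 : ℝ) = 2 ^ 2 := by norm_num
  have h16 : (16 : ℝ) = 2 ^ 4 := by norm_num
  induction j with
  | zero => simp [h0]
  | succ j ih =>
    have hx : (2 : ℝ) ^ (-(j : ℤ)) ≤ 1 := zpow_le_one_of_nonpos₀ one_le_two (by omega)
    rw [hrec, ih, h4, h16]
    simp only [zpow_neg_natCast_pow, two_zpow_neg_succ]
    exact sqrt_two_div_eight_mul_sqrt hx

lemma sqrt_one_sub_inv_zpow_neg_two_sub_one {y : ℝ} (hy : 1 < y) :
    √(1 - y⁻¹) ^ (-2 : ℤ) - 1 = 1 / (y - 1) := by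
  have hy' : y⁻¹ < 1 := inv_lt_one_of_one_lt₀ hy
  rw [zpow_neg, zpow_ofNat, Real.sq_sqrt (by linarith)]
  have : y - 1 ≠ 0 := by linarith
  field_simp
  ring

/-- Analytic result for `M = 2`: if `b_0 = 0` and
`b_{j+1} = (√2/8) · √(16^{−j} + b_j²)`, then `b_j = 4^{−j} · √(1 − 2^{−j})` for all
`j`; consequently the sharpness `μ_K = 4^{K+1} · b_{K+1}` equals `√(1 − 2^{−(K+1)})`,
and the Holevo phase variance is exactly `V_H = μ_K^{−2} − 1 = 1/(2^{K+1} − 1) = 2/N`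
with `N = 2·(2^{K+1} − 1)` the total number of resources: still only
standard-quantum-limit scaling. -/
theorem stmt19 (b : ℕ → ℝ) (h0 : b 0 = 0)
    (hrec : ∀ j : ℕ,
      b (j + 1) = (Real.sqrt 2 / 8) * Real.sqrt ((16 : ℝ) ^ (-(j : ℤ)) + (b j) ^ 2)) :
    (∀ j : ℕ, b j = (4 : ℝ) ^ (-(j : ℤ)) * Real.sqrt (1 - (2 : ℝ) ^ (-(j : ℤ)))) ∧
    (∀ K : ℕ,
      (4 : ℝ) ^ (K + 1) * b (K + 1) = Real.sqrt (1 - (2 : ℝ) ^ (-((K : ℤ) + 1))) ∧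
      ((4 : ℝ) ^ (K + 1) * b (K + 1)) ^ (-2 : ℤ) - 1 = 1 / ((2 : ℝ) ^ (K + 1) - 1) ∧
      1 / ((2 : ℝ) ^ (K + 1) - 1) = 2 / (2 * ((2 : ℝ) ^ (K + 1) - 1))) := by
  have hb := sharpness_recurrence_closed_form b h0 hrec
  refine ⟨hb, fun K => ?_⟩
  have hmu : (4 : ℝ) ^ (K + 1) * b (K + 1) = √(1 - ((2 : ℝ) ^ (K + 1))⁻¹) := by
    rw [hb, ← mul_assoc, zpow_neg, zpow_natCast, mul_inv_cancel₀ (by positivity), one_mul,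
      zpow_neg, zpow_natCast]
  refine ⟨?_, ?_, ?_⟩
  · rw [hmu, zpow_neg, ← Nat.cast_succ, zpow_natCast]
  · rw [hmu]
    exact sqrt_one_sub_inv_zpow_neg_two_sub_one (one_lt_pow₀ one_lt_two K.succ_ne_zero)
  · rw [div_mul_eq_div_div, div_self two_ne_zero]
end
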